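/- Let F be a field, let M be a p×q matrix over F, and let E be a p×q matrix in row reduced echelon form that is row equivalent to M. Then the number of pivot columns of E equals the dimension of the column space of M (the rank of M). -/

import Mathlib

/-!
Row equivalence preserves the rank, so it suffices to compute the column space of `E`.
In an RREF matrix the pivot column of row `i` is the standard basis vector `eᵢ`, and the
pivot columns are distinct basis vectors. Every column `∑ᵢ E i j • eᵢ` only involves rows
`i` with a nonzero entry, and such a row has a pivot, so the pivot columns form a basis of
the column space.
-/

open Matrix

/-- `E.IsPivot i j` : sweeping row `i` of `E` from the left, the first nonzero
entry is met at column `j` (i.e. `E i j ≠ 0` and all entries to its left vanish). -/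
def Matrix.IsPivot {F : Type*} [Field F] {p q : ℕ}
    (E : Matrix (Fin p) (Fin q) F) (i : Fin p) (j : Fin q) : Prop :=
  E i j ≠ 0 ∧ ∀ j' : Fin q, j' < j → E i j' = 0

/-- `E` is in row reduced echelon form:
(1) the first nonzero entry of every nonzero row is `1`;
(2) a pivot is the only nonzero entry of its column;
(3) a pivot in a lower row lies in a column strictly to the right;
(4) zero rows are at the bottom. -/
def Matrix.IsRREF {F : Type*} [Field F] {p q : ℕ}
    (E : Matrix (Fin p) (Fin q) F) : Prop :=
  (∀ i j, E.IsPivot i j → E i j = 1) ∧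
  (∀ i j, E.IsPivot i j → ∀ i' : Fin p, i' ≠ i → E i' j = 0) ∧
  (∀ i₁ j₁ i₂ j₂, E.IsPivot i₁ j₁ → E.IsPivot i₂ j₂ → i₁ < i₂ → j₁ < j₂) ∧
  (∀ i i' : Fin p, i ≤ i' → (∀ j, E i j = 0) → ∀ j, E i' j = 0)

/-- Two `p × q` matrices are row equivalent iff one is obtained from the
other by left multiplication by an invertible `p × p` matrix. -/
def Matrix.RowEquiv {F : Type*} [Field F] {p q : ℕ}
    (M N : Matrix (Fin p) (Fin q) F) : Prop :=
  ∃ P : Matrix (Fin p) (Fin p) F, IsUnit P ∧ N = P * M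

namespace Matrix

variable {F : Type*} [Field F] {p q : ℕ}

open scoped Classical in
noncomputable def pivotCols (E : Matrix (Fin p) (Fin q) F) : Finset (Fin q) :=
  Finset.univ.filter fun j => ∃ i, E.IsPivot i j

section Pivot

variable {E : Matrix (Fin p) (Fin q) F} {i : Fin p} {j j' : Fin q}

lemma IsPivot.unique (h : E.IsPivot i j) (h' : E.IsPivot i j') : j = j' := by
  rcases lt_trichotomy j j' with hlt | heq | hgt
  · exact absurd (h'.2 j hlt) h.1
  · exact heq
  · exact absurd (h.2 j' hgt) h'.1

lemma exists_isPivot_of_ne_zero (h : E i j ≠ 0) : ∃ j', E.IsPivot i j' := by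
  obtain ⟨j', hj', hmin⟩ := wellFounded_lt.has_min {j | E i j ≠ 0} ⟨j, h⟩
  exact ⟨j', hj', fun k hk => by_contra fun hk' => hmin k hk' hk⟩

lemma IsRREF.transpose_eq_single (hE : E.IsRREF) (h : E.IsPivot i j) :
    Eᵀ j = Pi.single i 1 := by
  funext i'
  by_cases hi' : i' = i
  · subst hi'
    simp [hE.1 i' j h]
  · simp [hE.2.1 i j h i' hi', hi']

end Pivot

section PivotCols

variable {E : Matrix (Fin p) (Fin q) F}

lemma IsRREF.transpose_mem_span_pivotCols (hE : E.IsRREF) (j : Fin q) :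
    Eᵀ j ∈ Submodule.span F (Set.range fun j : E.pivotCols => Eᵀ j) := by
  rw [← Finset.univ_sum_single (Eᵀ j)]
  refine Submodule.sum_mem _ fun i _ => ?_
  by_cases hij : E i j = 0
  · simp [hij]
  obtain ⟨j', hj'⟩ := exists_isPivot_of_ne_zero hij
  have hj'mem : j' ∈ E.pivotCols := by
    simpa [pivotCols] using (⟨i, hj'⟩ : ∃ i, E.IsPivot i j')
  have hsingle : Pi.single i (Eᵀ j i) = E i j • Eᵀ j' := by
    rw [hE.transpose_eq_single hj', ← Pi.single_smul, smul_eq_mul, mul_one, transpose_apply]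
  rw [hsingle]
  exact Submodule.smul_mem _ _ (Submodule.subset_span ⟨⟨j', hj'mem⟩, rfl⟩)

lemma IsRREF.linearIndependent_pivotCols (hE : E.IsRREF) :
    LinearIndependent F fun j : E.pivotCols => Eᵀ j := by
  have hpivot (j : E.pivotCols) : ∃ i, E.IsPivot i j := by
    simpa [pivotCols] using j.2
  choose row hrow using hpivot
  have hrow_inj : Function.Injective row := fun j j' h =>
    Subtype.ext ((hrow j).unique (h ▸ hrow j'))
  have hcols : (fun j : E.pivotCols => Eᵀ j) = (fun i => Pi.single i 1) ∘ row :=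
    funext fun j => hE.transpose_eq_single (hrow j)
  rw [hcols]
  exact (Pi.linearIndependent_single_one (Fin p) F).comp row hrow_inj

lemma IsRREF.finrank_span_cols (hE : E.IsRREF) :
    Module.finrank F (Submodule.span F (Set.range Eᵀ)) = E.pivotCols.card := by
  have hspan : Submodule.span F (Set.range Eᵀ) =
      Submodule.span F (Set.range fun j : E.pivotCols => Eᵀ j) :=
    le_antisymm
      (Submodule.span_le.mpr (Set.range_subset_iff.mpr hE.transpose_mem_span_pivotCols))
      (Submodule.span_mono (Set.range_comp_subset_range _ _))
  rw [hspan, finrank_span_eq_card hE.linearIndependent_pivotCols, Fintype.card_coe]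

end PivotCols

lemma RowEquiv.finrank_span_cols_eq {M N : Matrix (Fin p) (Fin q) F} (h : M.RowEquiv N) :
    Module.finrank F (Submodule.span F (Set.range Mᵀ)) =
      Module.finrank F (Submodule.span F (Set.range Nᵀ)) := by
  obtain ⟨P, hP, rfl⟩ := h
  have hrank := rank_mul_eq_right_of_isUnit_det P M ((isUnit_iff_isUnit_det P).mp hP)
  rwa [rank_eq_finrank_span_cols, rank_eq_finrank_span_cols, eq_comm] at hrank

end Matrix

open scoped Classical in
/-- The number of pivot columns of the RREF of `M` is the dimension of the
column space of `M`, i.e. the rank of `M`. -/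
theorem card_pivot_columns_eq_rank {F : Type*} [Field F] {p q : ℕ}
    (M E : Matrix (Fin p) (Fin q) F)
    (hE : E.IsRREF) (hME : M.RowEquiv E) :
    (Finset.univ.filter fun j : Fin q => ∃ i : Fin p, E.IsPivot i j).card =
      Module.finrank F (Submodule.span F (Set.range Mᵀ)) := by
  rw [hME.finrank_span_cols_eq, hE.finrank_span_cols, pivotCols]
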